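/- Let s be a primitive string of length n over Σ, π a context adaptive ordering family, x a string with |x| < n, and i ∈ Rng(x). Then the symbol in position |x|+1 of row i of M*(s) is the unique character c ∈ Σ satisfying b_x + Σ_{d <_{π_x} c} ℓ_{xd} ≤ i ≤ b_x + Σ_{d ≤_{π_x} c} ℓ_{xd} − 1, where b_x = min Rng(x), ℓ_{xd} = |Rng(xd)| (taken as 0 when Rng(xd) = ∅), and the sums range over characters d that are π_x-smaller than c (respectively π_x-smaller than or equal to c). -/

import Mathlib

/-- The cyclic rotation of `s` by `r`: `s[r+1..n] s[1..r]`. -/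
def rot {α : Type*} (s : List α) (r : ℕ) : List α := s.drop r ++ s.take r

/-- A string is primitive if its cyclic rotations are pairwise distinct. -/
def IsPrimitive {α : Type*} (s : List α) : Prop :=
  ∀ r₁ r₂ : ℕ, r₁ < s.length → r₂ < s.length → rot s r₁ = rot s r₂ → r₁ = r₂

/-- The context adaptive order induced by a family `π` of linear orders on the
alphabet, one for each string (context): `u ≺ v` iff, `x = u[1..k] = v[1..k]`
being the longest common prefix of `u` and `v`, the symbol `u[k+1]` is
`π x`-smaller than `v[k+1]`. -/
def caLt {α : Type*} (π : List α → LinearOrder α) (u v : List α) : Prop :=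
  ∃ (k : ℕ) (hu : k < u.length) (hv : k < v.length),
    u.take k = v.take k ∧ (π (u.take k)).lt (u.get ⟨k, hu⟩) (v.get ⟨k, hv⟩)

/-- The matrix `M*(s)`: an enumeration of the cyclic rotations of `s`
listed in `≺`-increasing order; the `i`-th row is `row i`. -/
structure SortedRotMatrix {α : Type*} (π : List α → LinearOrder α) (s : List α) where
  row : Fin s.length → List α
  row_is_rot : ∀ i, ∃ r : Fin s.length, row i = rot s (r : ℕ)
  rot_is_row : ∀ r : Fin s.length, ∃ i, row i = rot s (r : ℕ)
  sorted : ∀ i j : Fin s.length, i < j → caLt π (row i) (row j)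

/-- `Rng M x`: the set of row indices of `M*(s)` whose row has `x` as a prefix. -/
def Rng {α : Type*} [DecidableEq α] {π : List α → LinearOrder α} {s : List α}
    (M : SortedRotMatrix π s) (x : List α) : Finset (Fin s.length) :=
  Finset.univ.filter (fun i => x <+: M.row i)

/-!
The rows of `M*(s)` beginning with `x` form a block of consecutive rows, and along this block
the symbol following `x` is monotone for `π x`: at the first position where two rows differ,
the context-adaptive order compares them by `π` of their common prefix. A monotone function on a
block starting at `b` takes the value `c` exactly on the indices from `b + #{f < c}` to
`b + #{f ≤ c} - 1`, and the rows of the block carrying `d` after `x` are exactly `Rng (x d)`.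
-/

section Rows

variable {α : Type*} {π : List α → LinearOrder α} {s : List α}

theorem length_rot (s : List α) (r : ℕ) : (rot s r).length = s.length := by
  simp only [rot, List.length_append, List.length_drop, List.length_take]
  omega

theorem caLt.getElem_le_of_take_eq {u v : List α} (h : caLt π u v) {m : ℕ}
    (huv : u.take m = v.take m) (hu : m < u.length) (hv : m < v.length) :
    (π (u.take m)).le u[m] v[m] := by
  obtain ⟨k, hku, hkv, hk, hlt⟩ := h
  simp only [List.get_eq_getElem] at hlt
  rcases lt_trichotomy k m with hkm | rfl | hmk
  · have : u[k] = v[k] := (List.getElem_take' hku hkm).trans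
      ((List.getElem_of_eq huv _).trans (List.getElem_take' hkv hkm).symm)
    rw [this] at hlt
    exact absurd hlt (@lt_irrefl α (π _).toPreorder _)
  · exact @le_of_lt α (π _).toPreorder _ _ hlt
  · have : u[m] = v[m] := (List.getElem_take' hu hmk).trans
      ((List.getElem_of_eq hk _).trans (List.getElem_take' hv hmk).symm)
    rw [this]
    exact (π _).le_refl _

namespace SortedRotMatrix

variable (M : SortedRotMatrix π s)

theorem length_row (i : Fin s.length) : (M.row i).length = s.length := by
  obtain ⟨r, hr⟩ := M.row_is_rot i
  rw [hr, length_rot]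

theorem getElem_le_of_take_eq {i j : Fin s.length} (hij : i ≤ j) {m : ℕ}
    (h : (M.row i).take m = (M.row j).take m) (hm : m < s.length) :
    (π ((M.row i).take m)).le ((M.row i)[m]'(by rwa [M.length_row]))
      ((M.row j)[m]'(by rwa [M.length_row])) := by
  rcases hij.eq_or_lt with rfl | hij
  · exact (π _).le_refl _
  · exact (M.sorted i j hij).getElem_le_of_take_eq h _ _

/-- Indices are 0-based: `M.col k i` is the symbol in position `k + 1` of row `i`. -/
def col (k : Fin s.length) (i : Fin s.length) : α :=
  (M.row i)[(k : ℕ)]'(by rw [M.length_row]; exact k.isLt)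

theorem getElem?_row (k i : Fin s.length) : (M.row i)[(k : ℕ)]? = some (M.col k i) :=
  List.getElem?_eq_getElem _

variable [DecidableEq α]

theorem mem_Rng {x : List α} {i : Fin s.length} : i ∈ Rng M x ↔ x <+: M.row i := by
  simp [Rng]

theorem col_le_col {x : List α} (hx : x.length < s.length) {i j : Fin s.length} (hij : i ≤ j)
    (hi : i ∈ Rng M x) (hj : j ∈ Rng M x) :
    (π x).le (M.col ⟨x.length, hx⟩ i) (M.col ⟨x.length, hx⟩ j) := by
  have htake : ∀ {k}, k ∈ Rng M x → (M.row k).take x.length = x := fun hk =>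
    (List.prefix_iff_eq_take.mp (M.mem_Rng.mp hk)).symm
  have := M.getElem_le_of_take_eq hij ((htake hi).trans (htake hj).symm) hx
  rwa [htake hi] at this

theorem ordConnected_Rng (x : List α) : (Rng M x : Set (Fin s.length)).OrdConnected := by
  refine ⟨fun i hi k hk j ⟨hij, hjk⟩ => ?_⟩
  have hxi := M.mem_Rng.mp hi
  have hxk := M.mem_Rng.mp hk
  have hxs : x.length ≤ s.length := M.length_row i ▸ hxi.length_le
  /- Row `j` agrees with `x` on ever longer prefixes: at the first disagreement its symbol
  would lie both above and below that of `x` in the order of the common context. -/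
  have agree : ∀ m ≤ x.length, (M.row j).take m = x.take m := by
    intro m hm
    induction m with
    | zero => simp
    | succ m ih =>
      have hmx : m < x.length := hm
      have ih := ih hmx.le
      have hti : (M.row i).take m = x.take m := by
        rw [List.prefix_iff_eq_take.mp hxi, List.take_take, min_eq_left hmx.le]
      have htk : (M.row k).take m = x.take m := by
        rw [List.prefix_iff_eq_take.mp hxk, List.take_take, min_eq_left hmx.le]
      have hlo := M.getElem_le_of_take_eq hij (hti.trans ih.symm) (hmx.trans_le hxs)
      have hhi := M.getElem_le_of_take_eq hjk (ih.trans htk.symm) (hmx.trans_le hxs)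
      rw [hti, ← hxi.getElem hmx] at hlo
      rw [ih, ← hxk.getElem hmx] at hhi
      have hmj : m < (M.row j).length := by rw [M.length_row]; omega
      have heq : (M.row j)[m] = x[m] := (π (x.take m)).le_antisymm _ _ hhi hlo
      rw [List.take_add_one, List.take_add_one, ih, List.getElem?_eq_getElem hmj,
        List.getElem?_eq_getElem hmx, heq]
  exact M.mem_Rng.mpr (List.prefix_iff_eq_take.mpr (by rw [agree _ le_rfl, List.take_length]))

theorem Rng_append_singleton (x : List α) (hx : x.length < s.length) (d : α) :
    Rng M (x ++ [d]) = {j ∈ Rng M x | M.col ⟨x.length, hx⟩ j = d} := by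
  ext j
  have hxj : x.length < (M.row j).length := by rwa [M.length_row]
  rw [Finset.mem_filter, mem_Rng, mem_Rng, List.prefix_iff_eq_take, List.prefix_iff_eq_take,
    List.length_append, List.length_singleton, List.take_add_one, List.getElem?_eq_getElem hxj,
    Option.toList_some]
  constructor
  · intro h
    obtain ⟨hx, hd⟩ := List.append_inj' h rfl
    exact ⟨hx, (List.singleton_inj.mp hd).symm⟩
  · rintro ⟨hx, rfl⟩
    rw [← hx]
    rfl

theorem sum_card_Rng_append [Fintype α] (x : List α) (hx : x.length < s.length)
    (P : α → Prop) [DecidablePred P] :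
    ∑ d ∈ Finset.univ.filter P, (Rng M (x ++ [d])).card
      = {j ∈ Rng M x | P (M.col ⟨x.length, hx⟩ j)}.card := by
  simp only [M.Rng_append_singleton x hx, Finset.sum_card_fiberwise_eq_card_filter,
    Finset.mem_filter, Finset.mem_univ, true_and]

end SortedRotMatrix

end Rows

namespace MonotoneOn

open Finset

variable {n : ℕ} {β : Type*} [LinearOrder β] {R : Finset (Fin n)} {f : Fin n → β}

theorem min'_add_card_filter_lt_le (hf : MonotoneOn f R) (hne : R.Nonempty) {i : Fin n}
    (hi : i ∈ R) : (R.min' hne : ℕ) + #{j ∈ R | f j < f i} ≤ i := by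
  have hsub : {j ∈ R | f j < f i} ⊆ Ico (R.min' hne) i := fun j hj => by
    rw [mem_filter] at hj
    exact mem_Ico.mpr ⟨R.min'_le j hj.1, lt_of_not_ge fun hij => (hf hi hj.1 hij).not_gt hj.2⟩
  have hcard := card_le_card hsub
  rw [Fin.card_Ico] at hcard
  have hmin : R.min' hne ≤ i := R.min'_le i hi
  omega

theorem lt_min'_add_card_filter_le (hR : (R : Set (Fin n)).OrdConnected) (hf : MonotoneOn f R)
    (hne : R.Nonempty) {i : Fin n} (hi : i ∈ R) :
    (i : ℕ) + 1 ≤ R.min' hne + #{j ∈ R | f j ≤ f i} := by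
  have hsub : Icc (R.min' hne) i ⊆ {j ∈ R | f j ≤ f i} := fun j hj => by
    have hjR : j ∈ R := hR.out (R.min'_mem hne) hi (mem_Icc.mp hj)
    exact mem_filter.mpr ⟨hjR, hf hjR hi (mem_Icc.mp hj).2⟩
  have hcard := card_le_card hsub
  rw [Fin.card_Icc] at hcard
  omega

theorem apply_eq_iff_min'_add_card_filter (hR : (R : Set (Fin n)).OrdConnected)
    (hf : MonotoneOn f R) (hne : R.Nonempty) {i : Fin n} (hi : i ∈ R) (c : β) :
    f i = c ↔ (R.min' hne : ℕ) + #{j ∈ R | f j < c} ≤ i ∧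
      (i : ℕ) + 1 ≤ R.min' hne + #{j ∈ R | f j ≤ c} := by
  constructor
  · rintro rfl
    exact ⟨hf.min'_add_card_filter_lt_le hne hi, hf.lt_min'_add_card_filter_le hR hne hi⟩
  · rintro ⟨hlo, hhi⟩
    have hlo' := hf.min'_add_card_filter_lt_le hne hi
    have hhi' := hf.lt_min'_add_card_filter_le hR hne hi
    rcases lt_trichotomy (f i) c with hlt | heq | hgt
    · have : #{j ∈ R | f j ≤ f i} ≤ #{j ∈ R | f j < c} :=
        card_le_card (monotone_filter_right R fun _ _ h => h.trans_lt hlt)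
      omega
    · exact heq
    · have : #{j ∈ R | f j ≤ c} ≤ #{j ∈ R | f j < f i} :=
        card_le_card (monotone_filter_right R fun _ _ h => h.trans_lt hgt)
      omega

end MonotoneOn

open scoped Classical in
/-- Row indices are 0-based: row `i` here is row `i + 1` of `M*(s)`, and `b_x` is 0-based too. -/
theorem nextChar_unique_general {α : Type*} [Fintype α] [DecidableEq α]
    (π : List α → LinearOrder α) (s : List α)
    (M : SortedRotMatrix π s) (x : List α) (hx : x.length < s.length)
    (hne : (Rng M x).Nonempty) (i : Fin s.length) (hi : i ∈ Rng M x) :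
    ∀ c : α, (M.row i)[x.length]? = some c ↔
      (((Rng M x).min' hne : ℕ)
          + ∑ d ∈ Finset.univ.filter (fun d => (π x).lt d c), (Rng M (x ++ [d])).card
        ≤ (i : ℕ) ∧
       (i : ℕ) + 1 ≤ ((Rng M x).min' hne : ℕ)
          + ∑ d ∈ Finset.univ.filter (fun d => (π x).le d c), (Rng M (x ++ [d])).card) := by
  intro c
  let _ : LinearOrder α := π x
  have hmono : MonotoneOn (M.col ⟨x.length, hx⟩) (Rng M x) :=
    fun j hj k hk hjk => M.col_le_col hx hjk hj hk
  rw [M.getElem?_row ⟨x.length, hx⟩, Option.some_inj, M.sum_card_Rng_append x hx,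
    M.sum_card_Rng_append x hx]
  convert hmono.apply_eq_iff_min'_add_card_filter (M.ordConnected_Rng x) hne hi c

open scoped Classical in
/-- For `i ∈ Rng x`, the symbol in position `|x|+1` of row `i` of `M*(s)` is
the unique `c ∈ Σ` with
`b_x + Σ_{d <_{π_x} c} ℓ_{xd} ≤ i ≤ b_x + Σ_{d ≤_{π_x} c} ℓ_{xd} − 1`
(indices here are 0-based, so row `i` 0-based corresponds to row `i+1`
1-based and `b_x = min (Rng x)` is 0-based as well). -/
theorem nextChar_unique {α : Type*} [Fintype α] [Nonempty α] [DecidableEq α]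
    (π : List α → LinearOrder α) (s : List α) (hprim : IsPrimitive s)
    (M : SortedRotMatrix π s) (x : List α) (hx : x.length < s.length)
    (hne : (Rng M x).Nonempty) (i : Fin s.length) (hi : i ∈ Rng M x) :
    ∀ c : α, (M.row i)[x.length]? = some c ↔
      (((Rng M x).min' hne : ℕ)
          + ∑ d ∈ Finset.univ.filter (fun d => (π x).lt d c), (Rng M (x ++ [d])).card
        ≤ (i : ℕ) ∧
       (i : ℕ) + 1 ≤ ((Rng M x).min' hne : ℕ)
          + ∑ d ∈ Finset.univ.filter (fun d => (π x).le d c), (Rng M (x ++ [d])).card) :=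
  nextChar_unique_general π s M x hx hne i hi
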